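/- arXiv:1901.01793 — 3 statements merged into one kernel-verified Lean document; each statement's English description precedes it below -/
import Mathlib

section
/- Let X have a Gamma(n, λ) distribution with integer shape n ≥ 2 and rate λ > 0, and let f(x) = λe^{−λx}. For every s ≥ 2, the density g_s of the s-iterated distribution induced by X satisfies the recursion g_s(x) = ((n-1)/(n+s-2)) (f * g_s^{(n-1)})(x) + ((s-1)/(n+s-2)) f(x), where g_s^{(n-1)} denotes the density of the s-iterated distribution induced by a Gamma(n-1, λ) variable. -/
/-!
The `s`-iterated density of `Gamma(m + 1, λ)` is a mixture of the densities `Gamma(i + 1, λ)`,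
`i ≤ m`: substituting `t = x + u` and expanding `(x + u) ^ m` binomially turns the tail integral
into Gamma integrals. Convolving with `f = Gamma(1, λ)` raises every shape by one, so the
recursion reduces to a recursion between the mixture weights.
-/

open MeasureTheory Set Real

/-- Density of the `Gamma(n, λ)` distribution (integer shape `n ≥ 1`). -/
noncomputable def gammaDens (n : ℕ) (l x : ℝ) : ℝ :=
  l ^ n * x ^ (n - 1) * Real.exp (-l * x) / (n - 1).factorial

/-- Convolution of densities on `[0, ∞)`. -/
noncomputable def convol (f g : ℝ → ℝ) (x : ℝ) : ℝ :=
  ∫ t in (0 : ℝ)..x, f t * g (x - t)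

/-- Density of the s-iterated distribution induced by a density `g` (for `s ≥ 2`). -/
noncomputable def iterDens (g : ℝ → ℝ) (s : ℕ) (x : ℝ) : ℝ :=
  ((s : ℝ) - 1) / (∫ t in Set.Ioi (0 : ℝ), t ^ (s - 1) * g t) *
    ∫ t in Set.Ioi x, (t - x) ^ (s - 2) * g t

section
variable {l : ℝ}

lemma integrableOn_pow_mul_exp_neg_mul_Ioi (k : ℕ) (hl : 0 < l) :
    IntegrableOn (fun t : ℝ => t ^ k * Real.exp (-(l * t))) (Ioi 0) := by
  simpa [Real.rpow_natCast] using integrableOn_rpow_mul_exp_neg_mul_rpow (s := k) (p := 1)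
    (by linarith [k.cast_nonneg (α := ℝ)]) zero_lt_one hl

lemma integral_pow_mul_exp_neg_mul_Ioi (k : ℕ) (hl : 0 < l) :
    ∫ t in Ioi (0 : ℝ), t ^ k * Real.exp (-(l * t)) = k.factorial / l ^ (k + 1) := by
  have h := integral_rpow_mul_exp_neg_mul_Ioi (a := k + 1) (by positivity) hl
  rw [add_sub_cancel_right, Real.Gamma_nat_eq_factorial, ← Nat.cast_succ, Real.rpow_natCast,
    one_div_pow, one_div_mul_eq_div] at h
  simpa only [Real.rpow_natCast] using h

lemma integral_Ioi_eq_integral_Ioi_zero_comp_add (f : ℝ → ℝ) (x : ℝ) :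
    ∫ t in Ioi x, f t = ∫ u in Ioi 0, f (u + x) := by
  have h := (measurePreserving_add_right volume x).setIntegral_preimage_emb
    (measurableEmbedding_addRight x) f (Ioi x)
  rwa [show (· + x) ⁻¹' Ioi x = Ioi 0 by ext; simp, eq_comm] at h

lemma gammaDens_succ (m : ℕ) (l t : ℝ) :
    gammaDens (m + 1) l t = l ^ (m + 1) / m.factorial * (t ^ m * Real.exp (-(l * t))) := by
  rw [gammaDens, Nat.add_sub_cancel, neg_mul]
  ring

lemma continuous_gammaDens (n : ℕ) (l : ℝ) : Continuous (gammaDens n l) := by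
  unfold gammaDens
  fun_prop

lemma gammaDens_one (l : ℝ) : gammaDens 1 l = fun t => l * Real.exp (-l * t) := by
  ext t
  simp [gammaDens_succ 0]

lemma integral_Ioi_pow_mul_gammaDens (q m : ℕ) (hl : 0 < l) :
    ∫ t in Ioi (0 : ℝ), t ^ q * gammaDens (m + 1) l t
      = (m + q).factorial / (m.factorial * l ^ q) := by
  have h (t : ℝ) : t ^ q * gammaDens (m + 1) l t
      = l ^ (m + 1) / m.factorial * (t ^ (m + q) * Real.exp (-(l * t))) := by
    rw [gammaDens_succ]; ring
  simp_rw [h]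
  rw [integral_const_mul, integral_pow_mul_exp_neg_mul_Ioi _ hl]
  field_simp
  ring

lemma integral_Ioi_sub_pow_mul_gammaDens (q m : ℕ) (hl : 0 < l) (x : ℝ) :
    ∫ t in Ioi x, (t - x) ^ q * gammaDens (m + 1) l t
      = ∑ i ∈ Finset.range (m + 1),
          (q + (m - i)).factorial / ((m - i).factorial * l ^ (q + 1)) * gammaDens (i + 1) l x := by
  have expand (u : ℝ) : (u + x - x) ^ q * gammaDens (m + 1) l (u + x)
      = ∑ i ∈ Finset.range (m + 1), l ^ (m + 1) / m.factorial * Real.exp (-(l * x)) *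
          (x ^ i * m.choose i) * (u ^ (q + (m - i)) * Real.exp (-(l * u))) := by
    rw [add_sub_cancel_right, gammaDens_succ, add_comm u, add_pow, mul_add, neg_add,
      Real.exp_add, Finset.sum_mul, Finset.mul_sum, Finset.mul_sum]
    refine Finset.sum_congr rfl fun i _ => ?_
    ring
  rw [integral_Ioi_eq_integral_Ioi_zero_comp_add, integral_congr_ae (.of_forall expand),
    integral_finsetSum _ fun i _ =>
      (integrableOn_pow_mul_exp_neg_mul_Ioi _ hl).const_mul _]
  refine Finset.sum_congr rfl fun i hi => ?_
  obtain ⟨e, rfl⟩ : ∃ e, m = i + e := ⟨m - i, by grind⟩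
  have hchoose : ((i + e).choose i : ℝ) * i.factorial * e.factorial = (i + e).factorial := by
    have h := Nat.choose_mul_factorial_mul_factorial (Nat.le_add_right i e)
    rw [Nat.add_sub_cancel_left] at h
    exact_mod_cast h
  have hchoose_ne : ((i + e).choose i : ℝ) ≠ 0 := by
    exact_mod_cast (Nat.choose_pos (Nat.le_add_right i e)).ne'
  rw [integral_const_mul, integral_pow_mul_exp_neg_mul_Ioi _ hl, gammaDens_succ,
    Nat.add_sub_cancel_left, ← hchoose]
  field_simp
  ring

noncomputable def iterWeight (σ m i : ℕ) : ℝ :=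
  (σ + 1) * m.factorial * (σ + (m - i)).factorial / ((m + (σ + 1)).factorial * (m - i).factorial)

lemma iterDens_gammaDens (σ m : ℕ) (hl : 0 < l) (x : ℝ) :
    iterDens (gammaDens (m + 1) l) (σ + 2) x
      = ∑ i ∈ Finset.range (m + 1), iterWeight σ m i * gammaDens (i + 1) l x := by
  rw [iterDens, Nat.add_sub_cancel, show σ + 2 - 1 = σ + 1 by omega,
    integral_Ioi_pow_mul_gammaDens _ _ hl, integral_Ioi_sub_pow_mul_gammaDens _ _ hl,
    Finset.mul_sum]
  refine Finset.sum_congr rfl fun i _ => ?_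
  rw [iterWeight]
  push_cast
  field_simp
  ring

lemma iterWeight_zero (σ m : ℕ) : iterWeight σ m 0 = (σ + 1) / (m + σ + 1) := by
  rw [iterWeight, Nat.sub_zero, ← add_assoc, Nat.factorial_succ, add_comm σ m]
  push_cast
  field_simp

lemma iterWeight_succ_succ (σ m i : ℕ) :
    iterWeight σ (m + 1) (i + 1) = (m + 1) / (m + σ + 2) * iterWeight σ m i := by
  rw [iterWeight, iterWeight, Nat.add_sub_add_right, add_right_comm, Nat.factorial_succ (m + _),
    Nat.factorial_succ m]
  push_cast
  field_simp
  ring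

lemma convol_const_mul (f g : ℝ → ℝ) (c x : ℝ) :
    convol f (fun y => c * g y) x = c * convol f g x := by
  simp only [convol, mul_left_comm (f _), intervalIntegral.integral_const_mul]

lemma convol_finsetSum {ι : Type*} (s : Finset ι) {f : ℝ → ℝ} {g : ι → ℝ → ℝ}
    (hf : Continuous f) (hg : ∀ i ∈ s, Continuous (g i)) (x : ℝ) :
    convol f (fun y => ∑ i ∈ s, g i y) x = ∑ i ∈ s, convol f (g i) x := by
  simp only [convol, Finset.mul_sum]
  exact intervalIntegral.integral_finsetSum fun i hi =>
    (hf.mul ((hg i hi).comp (continuous_const.sub continuous_id))).intervalIntegrable _ _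

lemma convol_gammaDens_one_succ (j : ℕ) (l x : ℝ) :
    convol (gammaDens 1 l) (gammaDens (j + 1) l) x = gammaDens (j + 2) l x := by
  have integrand (t : ℝ) : gammaDens 1 l t * gammaDens (j + 1) l (x - t)
      = l ^ (j + 2) / j.factorial * Real.exp (-(l * x)) * (x - t) ^ j := by
    have hexp : Real.exp (-(l * x)) = Real.exp (-(l * t)) * Real.exp (-(l * (x - t))) := by
      rw [← Real.exp_add]; ring_nf
    rw [gammaDens_succ 0, gammaDens_succ, hexp]
    simp only [zero_add, pow_one, pow_zero, Nat.factorial_zero, Nat.cast_one, div_one, one_mul]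
    ring
  simp only [convol, integrand, intervalIntegral.integral_const_mul,
    intervalIntegral.integral_comp_sub_left (· ^ j), integral_pow, gammaDens_succ (j + 1),
    Nat.factorial_succ]
  push_cast
  field_simp
  ring

end

theorem iterated_density_gamma_recursion_general (n s : ℕ) (hn : 2 ≤ n) (hs : 2 ≤ s)
    (l : ℝ) (hl : 0 < l) (x : ℝ) :
    iterDens (gammaDens n l) s x
      = ((n : ℝ) - 1) / ((n : ℝ) + (s : ℝ) - 2) *
          convol (fun t => l * Real.exp (-l * t)) (iterDens (gammaDens (n - 1) l) s) x
        + ((s : ℝ) - 1) / ((n : ℝ) + (s : ℝ) - 2) * (l * Real.exp (-l * x)) := by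
  obtain ⟨m, rfl⟩ : ∃ m, n = m + 1 + 1 := ⟨n - 2, by omega⟩
  obtain ⟨σ, rfl⟩ : ∃ σ, s = σ + 2 := ⟨s - 2, by omega⟩
  have hmix : iterDens (gammaDens (m + 1) l) (σ + 2)
      = fun y => ∑ i ∈ Finset.range (m + 1), iterWeight σ m i * gammaDens (i + 1) l y :=
    funext (iterDens_gammaDens σ m hl)
  rw [Nat.add_sub_cancel, hmix, ← gammaDens_one,
    convol_finsetSum _ (continuous_gammaDens 1 l) fun i _ => (continuous_gammaDens _ l).const_mul _,
    iterDens_gammaDens σ (m + 1) hl, Finset.sum_range_succ', Finset.mul_sum]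
  simp only [convol_const_mul, convol_gammaDens_one_succ, iterWeight_succ_succ, iterWeight_zero]
  push_cast
  congr 1
  · refine Finset.sum_congr rfl fun i _ => ?_
    ring
  · rw [gammaDens_one]
    ring

/-- Recursion for the s-iterated density induced by a `Gamma(n, λ)` variable:
`g_s = ((n-1)/(n+s-2)) f ∗ g_s^{(n-1)} + ((s-1)/(n+s-2)) f` with `f(x) = λ e^{-λx}`. -/
theorem iterated_density_gamma_recursion (n s : ℕ) (hn : 2 ≤ n) (hs : 2 ≤ s)
    (l : ℝ) (hl : 0 < l) (x : ℝ) (hx : 0 ≤ x) :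
    iterDens (gammaDens n l) s x
      = ((n : ℝ) - 1) / ((n : ℝ) + (s : ℝ) - 2) *
          convol (fun t => l * Real.exp (-l * t)) (iterDens (gammaDens (n - 1) l) s) x
        + ((s : ℝ) - 1) / ((n : ℝ) + (s : ℝ) - 2) * (l * Real.exp (-l * x)) :=
  iterated_density_gamma_recursion_general n s hn hs l hl x
end

section
/- Let X have a Gamma(α, 1) distribution with integer shape α ≥ 2. For every s ≥ 2, the s-iterated tail induced by X is T̄_s(x) = e^{−x} + (e^{−x}/C(α+s-2, α-1)) ∑_{ℓ=1}^{α-1} C(s+α-ℓ-2, α-ℓ-1) x^ℓ/ℓ!, for all x ≥ 0. -/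
open MeasureTheory Set Real

/-! Substituting `t = x + u` and expanding `(x + u) ^ n` binomially turns the integral into
`exp (-x) * ∑ C(n, l) x ^ l ∫ u ^ (m + n - l) e ^ (-u)`, a sum of Gamma integrals
`(m + n - l)!`; dividing by `(n + m)!` rewrites each coefficient as a ratio of binomials, and
the `l = 0` term is `exp (-x)`. -/

theorem integrableOn_pow_mul_exp_neg_Ioi (n : ℕ) :
    IntegrableOn (fun u : ℝ => u ^ n * exp (-u)) (Ioi 0) := by
  refine (GammaIntegral_convergent (by positivity : (0 : ℝ) < n + 1)).congr_fun
    (fun u _ => ?_) measurableSet_Ioi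
  simp [mul_comm]

theorem integral_pow_mul_exp_neg_Ioi (n : ℕ) :
    ∫ u in Ioi (0 : ℝ), u ^ n * exp (-u) = n.factorial := by
  rw [← Gamma_nat_eq_factorial, Gamma_eq_integral (by positivity)]
  refine setIntegral_congr_fun measurableSet_Ioi fun u _ => ?_
  simp [mul_comm]

theorem setIntegral_Ioi_eq_setIntegral_Ioi_zero_comp_add {E : Type*} [NormedAddCommGroup E]
    [NormedSpace ℝ E] (f : ℝ → E) (x : ℝ) :
    ∫ t in Ioi x, f t = ∫ u in Ioi 0, f (u + x) := by
  have himg : (· + x) '' Ioi (0 : ℝ) = Ioi x := by simp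
  rw [← himg, (measurePreserving_add_right volume x).setIntegral_image_emb
    (Homeomorph.addRight x).measurableEmbedding]

theorem integral_Ioi_sub_pow_mul_pow_mul_exp_neg (m n : ℕ) (x : ℝ) :
    ∫ t in Ioi x, (t - x) ^ m * (t ^ n * exp (-t))
      = exp (-x) * ∑ l ∈ Finset.range (n + 1),
          (n.choose l : ℝ) * x ^ l * (m + (n - l)).factorial := by
  have hexpand : ∀ u : ℝ, u ^ m * ((u + x) ^ n * exp (-(u + x)))
      = ∑ l ∈ Finset.range (n + 1),
          exp (-x) * (n.choose l * x ^ l) * (u ^ (m + (n - l)) * exp (-u)) := by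
    intro u
    rw [add_comm u x, add_pow, Finset.sum_mul, Finset.mul_sum, neg_add, exp_add]
    refine Finset.sum_congr rfl fun l _ => ?_
    ring
  rw [setIntegral_Ioi_eq_setIntegral_Ioi_zero_comp_add, Finset.mul_sum]
  simp_rw [add_sub_cancel_right, hexpand]
  rw [integral_finsetSum _ fun l _ => (integrableOn_pow_mul_exp_neg_Ioi _).const_mul _]
  refine Finset.sum_congr rfl fun l _ => ?_
  rw [integral_const_mul, integral_pow_mul_exp_neg_Ioi]
  ring

theorem choose_mul_factorial_div_factorial_add {n l : ℕ} (hl : l ≤ n) (m : ℕ) :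
    (n.choose l : ℝ) * (m + (n - l)).factorial / (n + m).factorial
      = (m + (n - l)).choose (n - l) / ((n + m).choose n * l.factorial) := by
  obtain ⟨k, rfl⟩ := Nat.exists_eq_add_of_le hl
  rw [Nat.add_sub_cancel_left, Nat.cast_choose ℝ (Nat.le_add_right l k),
    Nat.cast_choose ℝ (Nat.le_add_left k m), Nat.cast_choose ℝ (Nat.le_add_right (l + k) m),
    Nat.add_sub_cancel_left, Nat.add_sub_cancel, Nat.add_sub_cancel_left]
  field_simp

theorem integral_Ioi_sub_pow_mul_pow_mul_exp_neg_div_factorial (m n : ℕ) (x : ℝ) :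
    (∫ t in Ioi x, (t - x) ^ m * (t ^ n * exp (-t))) / (n + m).factorial
      = exp (-x) / (n + m).choose n * ∑ l ∈ Finset.range (n + 1),
          ((m + (n - l)).choose (n - l) : ℝ) * x ^ l / l.factorial := by
  rw [integral_Ioi_sub_pow_mul_pow_mul_exp_neg, mul_div_assoc, Finset.sum_div, Finset.mul_sum,
    Finset.mul_sum]
  refine Finset.sum_congr rfl fun l hl => ?_
  have hl : l ≤ n := Nat.lt_succ_iff.mp (Finset.mem_range.mp hl)
  calc _ = exp (-x) * x ^ l
        * ((n.choose l : ℝ) * (m + (n - l)).factorial / (n + m).factorial) := by ring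
    _ = _ := by rw [choose_mul_factorial_div_factorial_add hl]; ring

theorem iterated_tail_gamma_explicit_general (a s : ℕ) (ha : 2 ≤ a) (hs : 2 ≤ s)
    (x : ℝ) :
    (∫ t in Ioi x, (t - x) ^ (s - 1) * (t ^ (a - 1) * Real.exp (-t))) /
        ((a + s - 2).factorial : ℝ)
      = Real.exp (-x)
        + Real.exp (-x) / ((a + s - 2).choose (a - 1) : ℝ) *
            ∑ l ∈ Finset.Icc 1 (a - 1),
              ((s + a - l - 2).choose (a - l - 1) : ℝ) * x ^ l / (l.factorial : ℝ) := by
  obtain ⟨n, rfl⟩ : ∃ n, a = n + 1 := ⟨a - 1, by omega⟩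
  obtain ⟨m, rfl⟩ : ∃ m, s = m + 1 := ⟨s - 1, by omega⟩
  have hC : ((n + m).choose n : ℝ) ≠ 0 :=
    Nat.cast_ne_zero.mpr (Nat.choose_pos (Nat.le_add_right n m)).ne'
  simp only [Nat.add_sub_cancel, show n + 1 + (m + 1) - 2 = n + m by omega]
  rw [integral_Ioi_sub_pow_mul_pow_mul_exp_neg_div_factorial, Finset.range_eq_Ico,
    Finset.sum_eq_sum_Ico_succ_bot n.succ_pos, zero_add, Nat.succ_eq_add_one,
    Finset.Ico_add_one_right_eq_Icc, mul_add]
  congr 1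
  · simp [add_comm m n, hC]
  · refine congrArg _ (Finset.sum_congr rfl fun l hl => ?_)
    rw [Finset.mem_Icc] at hl
    rw [show m + 1 + (n + 1) - l - 2 = m + (n - l) by omega, show n + 1 - l - 1 = n - l by omega]

/-- Explicit s-iterated tail induced by `Gamma(α, 1)` with integer shape `α ≥ 2`:
`T̄_s(x) = e^{-x} + (e^{-x}/C(α+s-2, α-1)) ∑_{ℓ=1}^{α-1} C(s+α-ℓ-2, α-ℓ-1) x^ℓ/ℓ!`. -/
theorem iterated_tail_gamma_explicit (a s : ℕ) (ha : 2 ≤ a) (hs : 2 ≤ s)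
    (x : ℝ) (hx : 0 ≤ x) :
    (∫ t in Ioi x, (t - x) ^ (s - 1) * (t ^ (a - 1) * Real.exp (-t))) /
        ((a + s - 2).factorial : ℝ)
      = Real.exp (-x)
        + Real.exp (-x) / ((a + s - 2).choose (a - 1) : ℝ) *
            ∑ l ∈ Finset.Icc 1 (a - 1),
              ((s + a - l - 2).choose (a - l - 1) : ℝ) * x ^ l / (l.factorial : ℝ) :=
  iterated_tail_gamma_explicit_general a s ha hs x
end

section
/- Let X be Weibull distributed with survival function e^{−x^α} where 0 < α < 1. Then for each fixed x > 0, the s-iterated tail T̄_s(x) converges to 1 as s → ∞. -/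
open MeasureTheory Set Real Filter

/-!
Write `M k = ∫ t ^ k f t` over `(0, ∞)` for a density `f`. The pointwise bounds
`t ^ (n + 1) - (n + 1) x t ^ n ≤ (t - x)₊ ^ (n + 1) ≤ t ^ (n + 1)` squeeze the iterated tail:
`1 - x (n + 1) M n / M (n + 1) ≤ T̄_{n+2}(x) ≤ 1`. For the Weibull density `M k = Γ(1 + k / α)`,
and log-convexity of `Γ` gives `Γ z z ^ δ ≤ Γ (z + δ)`, so that
`(n + 1) M n / M (n + 1) ≤ (1 + n / α) ^ (1 - 1 / α) → 0` as soon as `α < 1`.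
-/

/-- Tail of the s-iterated distribution induced by a Weibull variable with shape `α`,
survival function `e^{-x^α}` and density `α t^{α-1} e^{-t^α}`:
`T̄_s(x) = E[(X-x)_+^{s-1}] / Γ(1 + (s-1)/α)`. -/
noncomputable def weibullIterTail (a : ℝ) (s : ℕ) (x : ℝ) : ℝ :=
  (∫ t in Set.Ioi x, (t - x) ^ (s - 1) * (a * t ^ (a - 1) * Real.exp (-(t ^ a)))) /
    Real.Gamma (1 + ((s : ℝ) - 1) / a)

lemma pow_sub_mul_le_indicator_sub_pow {x t : ℝ} (hx : 0 ≤ x) (ht : 0 ≤ t) (n : ℕ) :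
    t ^ (n + 1) - (n + 1) * x * t ^ n ≤ (Ioi x).indicator (fun t => (t - x) ^ (n + 1)) t := by
  by_cases hxt : t ∈ Ioi x
  · rw [indicator_of_mem hxt]
    have h := abs_pow_sub_pow_le t (t - x) (n + 1)
    rw [sub_sub_cancel, abs_of_nonneg hx, abs_of_nonneg ht,
      abs_of_nonneg (sub_nonneg.2 (mem_Ioi.1 hxt).le), max_eq_left (sub_le_self t hx),
      Nat.add_sub_cancel, Nat.cast_succ] at h
    linarith [le_abs_self (t ^ (n + 1) - (t - x) ^ (n + 1))]
  · rw [indicator_of_notMem hxt]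
    have htx : t ≤ (n + 1) * x := by
      nlinarith [Nat.cast_nonneg (α := ℝ) n, not_lt.1 (mem_Ioi.not.1 hxt)]
    rw [pow_succ]
    nlinarith [mul_nonneg (pow_nonneg ht n) (sub_nonneg.2 htx)]

section DensityMoments

variable {f : ℝ → ℝ} {x : ℝ}

lemma integrableOn_sub_pow_mul
    (hint : ∀ k : ℕ, IntegrableOn (fun t => t ^ k * f t) (Ioi 0)) (hx : 0 ≤ x) (k : ℕ) :
    IntegrableOn (fun t => (t - x) ^ k * f t) (Ioi x) := by
  have hsub : Ioi x ⊆ Ioi 0 := Ioi_subset_Ioi hx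
  have hmeas : AEStronglyMeasurable f (volume.restrict (Ioi x)) := by
    simpa using ((hint 0).mono_set hsub).aestronglyMeasurable
  refine Integrable.mono ((hint k).mono_set hsub)
    (((continuous_id.sub continuous_const).pow k).aestronglyMeasurable.mul hmeas) ?_
  filter_upwards [ae_restrict_mem measurableSet_Ioi] with t ht
  have ht0 : 0 < t := hsub ht
  rw [norm_mul, norm_mul, norm_pow, norm_pow,
    Real.norm_of_nonneg (sub_nonneg.2 (mem_Ioi.1 ht).le), Real.norm_of_nonneg ht0.le]
  gcongr
  · linarith [mem_Ioi.1 ht]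
  · linarith

lemma integral_sub_pow_mul_le (hf : ∀ t ∈ Ioi 0, 0 ≤ f t)
    (hint : ∀ k : ℕ, IntegrableOn (fun t => t ^ k * f t) (Ioi 0)) (hx : 0 ≤ x) (k : ℕ) :
    ∫ t in Ioi x, (t - x) ^ k * f t ≤ ∫ t in Ioi 0, t ^ k * f t := by
  have hsub : Ioi x ⊆ Ioi 0 := Ioi_subset_Ioi hx
  calc ∫ t in Ioi x, (t - x) ^ k * f t ≤ ∫ t in Ioi x, t ^ k * f t := by
        refine setIntegral_mono_on (integrableOn_sub_pow_mul hint hx k)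
          ((hint k).mono_set hsub) measurableSet_Ioi fun t ht => ?_
        have ht0 : 0 < t := hsub ht
        have : 0 ≤ t - x := sub_nonneg.2 (mem_Ioi.1 ht).le
        gcongr
        · exact hf t ht0
        · linarith
    _ ≤ ∫ t in Ioi 0, t ^ k * f t := by
        refine setIntegral_mono_set (hint k) ?_ hsub.eventuallyLE
        filter_upwards [ae_restrict_mem measurableSet_Ioi] with t ht
        exact mul_nonneg (pow_nonneg (le_of_lt ht) k) (hf t ht)

lemma integral_pow_sub_le_integral_sub_pow (hf : ∀ t ∈ Ioi 0, 0 ≤ f t)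
    (hint : ∀ k : ℕ, IntegrableOn (fun t => t ^ k * f t) (Ioi 0)) (hx : 0 ≤ x) (n : ℕ) :
    (∫ t in Ioi 0, t ^ (n + 1) * f t) - (n + 1) * x * ∫ t in Ioi 0, t ^ n * f t ≤
      ∫ t in Ioi x, (t - x) ^ (n + 1) * f t := by
  have htail : IntegrableOn ((Ioi x).indicator fun t => (t - x) ^ (n + 1) * f t) (Ioi 0) :=
    (integrableOn_sub_pow_mul hint hx (n + 1)).integrable_indicator measurableSet_Ioi
      |>.integrableOn
  have hinter : Ioi 0 ∩ Ioi x = Ioi x := by rw [Ioi_inter_Ioi, max_eq_right hx]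
  rw [← integral_const_mul, ← integral_sub (hint _) ((hint n).const_mul _), ← hinter,
    ← setIntegral_indicator measurableSet_Ioi]
  refine setIntegral_mono_on (((hint _).sub ((hint n).const_mul _))) htail measurableSet_Ioi
    fun t ht => ?_
  have h := mul_le_mul_of_nonneg_right
    (pow_sub_mul_le_indicator_sub_pow hx (le_of_lt ht) n) (hf t ht)
  simp only [indicator_mul_left] at h ⊢
  linarith

theorem tendsto_integral_sub_pow_div_integral_pow (hf : ∀ t ∈ Ioi 0, 0 ≤ f t)
    (hint : ∀ k : ℕ, IntegrableOn (fun t => t ^ k * f t) (Ioi 0)) (hx : 0 ≤ x)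
    (hpos : ∀ k : ℕ, 0 < ∫ t in Ioi 0, t ^ k * f t)
    (hratio : Tendsto (fun n : ℕ => (n + 1) * (∫ t in Ioi 0, t ^ n * f t) /
      ∫ t in Ioi 0, t ^ (n + 1) * f t) atTop (nhds 0)) :
    Tendsto (fun n : ℕ => (∫ t in Ioi x, (t - x) ^ (n + 1) * f t) /
      ∫ t in Ioi 0, t ^ (n + 1) * f t) atTop (nhds 1) := by
  have hlower : Tendsto (fun n : ℕ => 1 - x * ((n + 1) * (∫ t in Ioi 0, t ^ n * f t) /
      ∫ t in Ioi 0, t ^ (n + 1) * f t)) atTop (nhds 1) := by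
    simpa using (hratio.const_mul x).const_sub 1
  refine tendsto_of_tendsto_of_tendsto_of_le_of_le hlower tendsto_const_nhds (fun n => ?_)
    fun n => (div_le_one (hpos _)).2 (integral_sub_pow_mul_le hf hint hx _)
  have hM := (hpos (n + 1)).ne'
  rw [le_div_iff₀ (hpos _), sub_mul, one_mul, mul_div_assoc', div_mul_cancel₀ _ hM]
  linarith [integral_pow_sub_le_integral_sub_pow hf hint hx n]

end DensityMoments

lemma Gamma_mul_rpow_le_Gamma_add {z δ : ℝ} (hz : 0 < z) (hδ : 1 < δ) :
    Gamma z * z ^ δ ≤ Gamma (z + δ) := by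
  have hδ0 : 0 < δ := one_pos.trans hδ
  have hΓ := Gamma_pos_of_pos hz
  have hconv := Gamma_mul_add_mul_le_rpow_Gamma_mul_rpow_Gamma hz (by linarith : 0 < z + δ)
    (sub_pos.2 ((inv_lt_one₀ hδ0).2 hδ)) (inv_pos.2 hδ0) (sub_add_cancel 1 δ⁻¹)
  have hpt : (1 - δ⁻¹) * z + δ⁻¹ * (z + δ) = z + 1 := by field_simp; ring
  rw [hpt, Gamma_add_one hz.ne'] at hconv
  have h := rpow_le_rpow (by positivity) hconv hδ0.le
  rw [mul_rpow (by positivity) (by positivity), mul_rpow (by positivity) (by positivity),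
    ← rpow_mul hΓ.le, ← rpow_mul (Gamma_pos_of_pos (by linarith)).le, inv_mul_cancel₀ hδ0.ne',
    rpow_one, sub_mul, one_mul, inv_mul_cancel₀ hδ0.ne', rpow_sub_one hΓ.ne'] at h
  refine le_of_mul_le_mul_left ?_ (rpow_pos_of_pos hΓ δ)
  rw [div_mul_eq_mul_div, le_div_iff₀ hΓ] at h
  linarith

lemma tendsto_mul_Gamma_div_Gamma_add_atTop {δ : ℝ} (hδ : 1 < δ) :
    Tendsto (fun z => z * Gamma z / Gamma (z + δ)) atTop (nhds 0) := by
  have hlim : Tendsto (fun z : ℝ => z ^ (-(δ - 1))) atTop (nhds 0) :=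
    tendsto_rpow_neg_atTop (sub_pos.2 hδ)
  refine squeeze_zero' ?_ ?_ hlim
  · filter_upwards [eventually_gt_atTop 0] with z hz
    have := Gamma_pos_of_pos hz
    have := Gamma_pos_of_pos (by linarith : 0 < z + δ)
    positivity
  · filter_upwards [eventually_gt_atTop 0] with z hz
    rw [div_le_iff₀ (Gamma_pos_of_pos (by linarith)), rpow_neg hz.le, rpow_sub_one hz.ne']
    rw [inv_div, div_mul_eq_mul_div, le_div_iff₀ (rpow_pos_of_pos hz δ), mul_assoc]
    exact mul_le_mul_of_nonneg_left (Gamma_mul_rpow_le_Gamma_add hz hδ) hz.le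

noncomputable def weibullDensity (a t : ℝ) : ℝ := a * t ^ (a - 1) * exp (-(t ^ a))

lemma weibullDensity_nonneg {a t : ℝ} (ha : 0 ≤ a) (ht : 0 ≤ t) : 0 ≤ weibullDensity a t := by
  unfold weibullDensity
  positivity

lemma abs_mul_rpow_smul_gammaIntegrand_rpow {a t : ℝ} (ha : 0 < a) (ht : 0 < t) (k : ℕ) :
    (|a| * t ^ (a - 1)) • (exp (-(t ^ a)) * (t ^ a) ^ (1 + k / a - 1)) =
      t ^ k * weibullDensity a t := by
  rw [← rpow_mul ht.le, show a * (1 + k / a - 1) = k by field_simp; ring, rpow_natCast,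
    abs_of_pos ha, smul_eq_mul, weibullDensity]
  ring

lemma integrableOn_pow_mul_weibullDensity {a : ℝ} (ha : 0 < a) (k : ℕ) :
    IntegrableOn (fun t => t ^ k * weibullDensity a t) (Ioi 0) :=
  ((integrableOn_Ioi_comp_rpow_iff _ ha.ne').2
    (GammaIntegral_convergent (by positivity))).congr_fun
    (fun _ ht => abs_mul_rpow_smul_gammaIntegrand_rpow ha ht k) measurableSet_Ioi

lemma integral_pow_mul_weibullDensity {a : ℝ} (ha : 0 < a) (k : ℕ) :
    ∫ t in Ioi 0, t ^ k * weibullDensity a t = Gamma (1 + k / a) := by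
  rw [Gamma_eq_integral (by positivity),
    ← integral_comp_rpow_Ioi (fun u => exp (-u) * u ^ (1 + k / a - 1)) ha.ne']
  exact setIntegral_congr_fun measurableSet_Ioi
    fun _ ht => (abs_mul_rpow_smul_gammaIntegrand_rpow ha ht k).symm

lemma tendsto_succ_mul_Gamma_div_Gamma_succ {a : ℝ} (ha0 : 0 < a) (ha1 : a < 1) :
    Tendsto (fun n : ℕ => (n + 1) * Gamma (1 + n / a) / Gamma (1 + ((n + 1 : ℕ) : ℝ) / a))
      atTop (nhds 0) := by
  have hz : Tendsto (fun n : ℕ => 1 + n / a) atTop atTop :=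
    tendsto_atTop_add_const_left _ 1
      (tendsto_natCast_atTop_atTop.atTop_div_const ha0)
  refine squeeze_zero (fun n => ?_) (fun n => ?_)
    ((tendsto_mul_Gamma_div_Gamma_add_atTop ((one_lt_inv₀ ha0).2 ha1)).comp hz)
  · have : 0 < Gamma (1 + ((n + 1 : ℕ) : ℝ) / a) := Gamma_pos_of_pos (by positivity)
    have : 0 < Gamma (1 + n / a) := Gamma_pos_of_pos (by positivity)
    positivity
  · have hsucc : 1 + ((n + 1 : ℕ) : ℝ) / a = 1 + n / a + a⁻¹ := by push_cast; ring
    have hn : (n : ℝ) + 1 ≤ 1 + n / a := by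
      rw [add_comm, add_le_add_iff_left, le_div_iff₀ ha0]
      nlinarith [Nat.cast_nonneg (α := ℝ) n]
    rw [Function.comp_apply, hsucc]
    gcongr

/-- For a Weibull variable with shape `0 < α < 1` and fixed `x > 0`, the s-iterated tail
converges to 1 as `s → ∞`. -/
theorem weibull_iterated_tail_tendsto_one (a : ℝ) (ha0 : 0 < a) (ha1 : a < 1)
    (x : ℝ) (hx : 0 < x) :
    Tendsto (fun s : ℕ => weibullIterTail a s x) atTop (nhds 1) := by
  have hlim := tendsto_integral_sub_pow_div_integral_pow (x := x)
    (fun t ht => weibullDensity_nonneg ha0.le (le_of_lt ht))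
    (integrableOn_pow_mul_weibullDensity ha0) hx.le
    (fun k => integral_pow_mul_weibullDensity ha0 k ▸ Gamma_pos_of_pos (by positivity))
    (by simpa only [integral_pow_mul_weibullDensity ha0] using
      tendsto_succ_mul_Gamma_div_Gamma_succ ha0 ha1)
  rw [← tendsto_add_atTop_iff_nat 2]
  refine hlim.congr fun n => ?_
  rw [integral_pow_mul_weibullDensity ha0, weibullIterTail, Nat.add_succ_sub_one]
  congr 3
  push_cast
  ring
end
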